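/- Let γ ∈ ℝ with |γ| = 1, and let s ∈ ℝ be arbitrary. Then the estimate ‖B̃_γ(f,g;s)‖_{L²(ℝ×ℤ)} ≤ C ‖f‖_{L²(ℝ×ℤ)} ‖g‖_{L²(ℝ×ℤ)} fails: for every constant C > 0 there exist nonnegative functions f, g ∈ L²(ℝ×ℤ) with ‖B̃_γ(f,g;s)‖_{L²(ℝ×ℤ)} > C ‖f‖_{L²(ℝ×ℤ)} ‖g‖_{L²(ℝ×ℤ)}. -/

import Mathlib

open MeasureTheory ENNReal

/-- Japanese bracket `⟨x⟩ = 1 + |x|`. -/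
noncomputable def jb (x : ℝ) : ℝ := 1 + |x|

lemma jb_pos (x : ℝ) : 0 < jb x := by unfold jb; positivity
lemma jb_one_le (x : ℝ) : 1 ≤ jb x := by
  have := abs_nonneg x; unfold jb; linarith

lemma jb_half_le_two {x : ℝ} (hx : |x| ≤ 1) : jb x ^ (1/2 : ℝ) ≤ 2 := by
  have h1 : (1:ℝ) ≤ jb x := jb_one_le x
  have hx' : jb x ≤ 2 := by unfold jb; have := abs_le.mp hx; cases abs_cases x <;> linarith
  calc jb x ^ (1/2:ℝ) ≤ jb x ^ (1:ℝ) := Real.rpow_le_rpow_of_exponent_le h1 (by norm_num)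
    _ = jb x := Real.rpow_one _
    _ ≤ 2 := hx'

lemma jb_half_pos (x : ℝ) : 0 < jb x ^ (1/2 : ℝ) := Real.rpow_pos_of_pos (jb_pos x) _

/-- The `L²(ℝ×ℤ)` norm (valued in `ℝ≥0∞`) of a nonnegative function,
with respect to the product of Lebesgue measure on `ℝ` and counting measure on `ℤ`. -/
noncomputable def l2RZ (f : ℝ × ℤ → ℝ) : ℝ≥0∞ :=
  (∑' n : ℤ, ∫⁻ τ : ℝ, ENNReal.ofReal (f (τ, n)) ^ 2) ^ (1/2 : ℝ)

noncomputable def blockF (a' : ℝ) (k : ℤ) : ℝ × ℤ → ℝ :=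
  fun p => (Set.Icc a' (a'+1)).indicator (fun _ => (1:ℝ)) p.1 * (if p.2 = k then 1 else 0)

lemma blockF_eq_one {a' τ : ℝ} (k : ℤ) (h : τ ∈ Set.Icc a' (a'+1)) : blockF a' k (τ, k) = 1 := by
  unfold blockF
  simp [Set.indicator_of_mem h]

lemma blockF_meas (a' : ℝ) (k : ℤ) : Measurable (blockF a' k) := by
  unfold blockF
  refine Measurable.mul ?_ ?_
  · exact (measurable_const.indicator measurableSet_Icc).comp measurable_fst
  · exact (Measurable.of_discrete (f := fun n : ℤ => if n = k then (1:ℝ) else 0)).comp measurable_snd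

lemma blockF_nonneg (a' : ℝ) (k : ℤ) (p : ℝ × ℤ) : 0 ≤ blockF a' k p := by
  unfold blockF
  refine mul_nonneg (Set.indicator_nonneg (fun _ _ => zero_le_one) _) ?_
  split_ifs <;> norm_num

lemma l2_block (a' : ℝ) (k : ℤ) : l2RZ (blockF a' k) = 1 := by
  unfold l2RZ blockF
  have key : ∀ n : ℤ, (∫⁻ τ : ℝ, ENNReal.ofReal ((Set.Icc a' (a'+1)).indicator (fun _ => (1:ℝ)) τ * (if n = k then (1:ℝ) else 0)) ^ 2) = if n = k then 1 else 0 := by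
    intro n
    by_cases h : n = k
    · simp only [h, eq_self_iff_true, if_true, mul_one]
      have e : ∀ τ : ℝ, ENNReal.ofReal ((Set.Icc a' (a'+1)).indicator (fun _ => (1:ℝ)) τ) ^ 2
          = (Set.Icc a' (a'+1)).indicator (fun _ => (1:ℝ≥0∞)) τ := by
        intro τ
        by_cases hτ : τ ∈ Set.Icc a' (a'+1)
        · rw [Set.indicator_of_mem hτ, Set.indicator_of_mem hτ]; simp
        · rw [Set.indicator_of_notMem hτ, Set.indicator_of_notMem hτ]; simp
      simp_rw [e]
      rw [lintegral_indicator measurableSet_Icc]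
      simp [Real.volume_Icc]
    · simp [h]
  simp only [key]
  rw [tsum_ite_eq]
  exact ENNReal.one_rpow _

/-- The bilinear form `B̃_γ(f,g;s)(τ,n)`, dual to the estimate
`‖∂ₓ(u v̄)‖_{Y_{γ,per}^{s−1/2,−1/2}} ≲ ‖u‖_{X_{per}^{s,1/2}} ‖v‖_{X_{per}^{s,1/2}}`. -/
noncomputable def Bγt (γ s : ℝ) (f g : ℝ × ℤ → ℝ) (τ : ℝ) (n : ℤ) : ℝ≥0∞ :=
  ENNReal.ofReal (|(n : ℝ)| * jb (n : ℝ) ^ (s - 1/2)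
      / jb (τ + γ * |(n : ℝ)| * (n : ℝ)) ^ (1/2 : ℝ)) *
    ∑' n₁ : ℤ, ∫⁻ τ₁ : ℝ,
      ENNReal.ofReal (f (τ₁, n₁) * g (τ - τ₁, n - n₁) /
        (jb (n₁ : ℝ) ^ s * jb (τ₁ + (n₁ : ℝ) ^ 2) ^ (1/2 : ℝ)
          * jb ((n : ℝ) - (n₁ : ℝ)) ^ s
          * jb (τ - τ₁ - ((n : ℝ) - (n₁ : ℝ)) ^ 2) ^ (1/2 : ℝ)))

lemma main_aux (γ s C : ℝ) (hC : 0 < C) (N : ℕ) (m : ℤ)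
    (hN1 : (1:ℝ) ≤ N) (hNC : 2048 * C ^ 2 + 1 ≤ (N:ℝ))
    (habs : |(m:ℝ)| = N) (hres : γ * |(m:ℝ)| * (m:ℝ) = (N:ℝ)^2) :
    ∃ f g : ℝ × ℤ → ℝ,
      Measurable f ∧ Measurable g ∧ (∀ p, 0 ≤ f p) ∧ (∀ p, 0 ≤ g p) ∧
      l2RZ f ≠ ⊤ ∧ l2RZ g ≠ ⊤ ∧
      ENNReal.ofReal C * l2RZ f * l2RZ g <
        (∑' n : ℤ, ∫⁻ τ : ℝ, (Bγt γ s f g τ n) ^ 2) ^ (1/2 : ℝ) := by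
  have h1N : (0:ℝ) < 1 + N := by linarith
  have hN0 : (0:ℝ) < N := by linarith
  set a : ℝ := -(N:ℝ)^2 with ha
  refine ⟨blockF a m, blockF 0 0, blockF_meas a m, blockF_meas 0 0,
    blockF_nonneg a m, blockF_nonneg 0 0, by rw [l2_block]; exact one_ne_top,
    by rw [l2_block]; exact one_ne_top, ?_⟩
  rw [l2_block, l2_block, mul_one, mul_one]
  set q : ℝ := (1 + (N:ℝ)) ^ (1/2 : ℝ) with hqdef
  have hq0 : 0 < q := Real.rpow_pos_of_pos h1N _
  have hq2 : q ^ 2 = 1 + N := by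
    rw [hqdef, ← Real.rpow_natCast ((1+(N:ℝ)) ^ (1/2:ℝ)) 2, ← Real.rpow_mul h1N.le]
    norm_num
  set K : ℝ := (N:ℝ) / (16 * q) with hKdef
  have hK0 : 0 < K := div_pos hN0 (by positivity)
  have hm2 : ((m:ℝ))^2 = (N:ℝ)^2 := by rw [← sq_abs, habs]
  have hjbm : jb (m:ℝ) = 1 + N := by rw [jb, habs]
  have hPs : (0:ℝ) < (1 + (N:ℝ)) ^ s := Real.rpow_pos_of_pos h1N s
  -- pointwise lower bound on the window
  have hpt : ∀ τ ∈ Set.Icc (a + 1/2) (a + 1), ENNReal.ofReal K ≤ Bγt γ s (blockF a m) (blockF 0 0) τ m := by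
    intro τ hτ
    obtain ⟨hτ1, hτ2⟩ := hτ
    have hin : ENNReal.ofReal (1/(4*((1+(N:ℝ))^s))) * ENNReal.ofReal (1/2) ≤
        ∫⁻ τ₁ : ℝ, ENNReal.ofReal (blockF a m (τ₁, m) * blockF 0 0 (τ - τ₁, m - m) /
          (jb (m:ℝ) ^ s * jb (τ₁ + (m:ℝ)^2) ^ (1/2:ℝ) * jb ((m:ℝ) - (m:ℝ)) ^ s
            * jb (τ - τ₁ - ((m:ℝ) - (m:ℝ))^2) ^ (1/2:ℝ))) := by
      calc ENNReal.ofReal (1/(4*((1+(N:ℝ))^s))) * ENNReal.ofReal (1/2)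
          = ENNReal.ofReal (1/(4*((1+(N:ℝ))^s))) * volume (Set.Icc a (a + 1/2)) := by
            rw [Real.volume_Icc]; norm_num
        _ = ∫⁻ _ in Set.Icc a (a + 1/2), ENNReal.ofReal (1/(4*((1+(N:ℝ))^s))) :=
            (setLIntegral_const _ _).symm
        _ ≤ ∫⁻ τ₁ in Set.Icc a (a + 1/2), ENNReal.ofReal (blockF a m (τ₁, m) * blockF 0 0 (τ - τ₁, m - m) /
              (jb (m:ℝ) ^ s * jb (τ₁ + (m:ℝ)^2) ^ (1/2:ℝ) * jb ((m:ℝ) - (m:ℝ)) ^ s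
                * jb (τ - τ₁ - ((m:ℝ) - (m:ℝ))^2) ^ (1/2:ℝ))) := by
            refine setLIntegral_mono' measurableSet_Icc (fun τ₁ hτ₁ => ?_)
            obtain ⟨h1, h2⟩ := hτ₁
            apply ENNReal.ofReal_le_ofReal
            have hfv : blockF a m (τ₁, m) = 1 :=
              blockF_eq_one m ⟨by linarith, by linarith⟩
            have hgv : blockF 0 0 (τ - τ₁, m - m) = 1 := by
              rw [sub_self]
              exact blockF_eq_one 0 ⟨by linarith, by linarith⟩
            rw [hfv, hgv, one_mul]
            have e0 : (m:ℝ) - (m:ℝ) = 0 := sub_self _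
            rw [e0, hjbm, hm2]
            have hjb0 : jb 0 = 1 := by rw [jb]; simp
            rw [hjb0, Real.one_rpow]
            have e1 : τ - τ₁ - (0:ℝ)^2 = τ - τ₁ := by ring
            rw [e1]
            have hu : jb (τ₁ + (N:ℝ)^2) ^ (1/2:ℝ) ≤ 2 :=
              jb_half_le_two (abs_le.mpr ⟨by linarith, by linarith⟩)
            have hv : jb (τ - τ₁) ^ (1/2:ℝ) ≤ 2 :=
              jb_half_le_two (abs_le.mpr ⟨by linarith, by linarith⟩)
            have hu0 := jb_half_pos (τ₁ + (N:ℝ)^2)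
            have hv0 := jb_half_pos (τ - τ₁)
            have huv : jb (τ₁ + (N:ℝ)^2) ^ (1/2:ℝ) * jb (τ - τ₁) ^ (1/2:ℝ) ≤ 4 := by
              calc jb (τ₁ + (N:ℝ)^2) ^ (1/2:ℝ) * jb (τ - τ₁) ^ (1/2:ℝ)
                  ≤ 2 * jb (τ - τ₁) ^ (1/2:ℝ) := mul_le_mul_of_nonneg_right hu hv0.le
                _ ≤ 4 := by linarith
            have hD : (1 + (N:ℝ))^s * jb (τ₁ + (N:ℝ)^2) ^ (1/2:ℝ) * 1 * jb (τ - τ₁) ^ (1/2:ℝ)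
                ≤ 4 * ((1+(N:ℝ))^s) := by
              calc (1 + (N:ℝ))^s * jb (τ₁ + (N:ℝ)^2) ^ (1/2:ℝ) * 1 * jb (τ - τ₁) ^ (1/2:ℝ)
                  = (1 + (N:ℝ))^s * (jb (τ₁ + (N:ℝ)^2) ^ (1/2:ℝ) * jb (τ - τ₁) ^ (1/2:ℝ)) := by ring
                _ ≤ (1 + (N:ℝ))^s * 4 := mul_le_mul_of_nonneg_left huv hPs.le
                _ = 4 * ((1+(N:ℝ))^s) := by ring
            have hD0 : 0 < (1 + (N:ℝ))^s * jb (τ₁ + (N:ℝ)^2) ^ (1/2:ℝ) * 1 * jb (τ - τ₁) ^ (1/2:ℝ) := by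
              positivity
            exact one_div_le_one_div_of_le hD0 hD
        _ ≤ _ := setLIntegral_le_lintegral _ _
    calc ENNReal.ofReal K
        ≤ ENNReal.ofReal ((N:ℝ) * (1+(N:ℝ))^(s - 1/2) / 2) *
            (ENNReal.ofReal (1/(4*((1+(N:ℝ))^s))) * ENNReal.ofReal (1/2)) := by
          rw [← ENNReal.ofReal_mul (by positivity), ← ENNReal.ofReal_mul (by positivity)]
          apply ENNReal.ofReal_le_ofReal
          apply le_of_eq
          have e2 : (1+(N:ℝ)) ^ (s - 1/2) = (1+(N:ℝ))^s / q := by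
            rw [Real.rpow_sub h1N, hqdef]
          rw [e2, hKdef]
          field_simp
          ring
      _ ≤ ENNReal.ofReal (|(m:ℝ)| * jb (m:ℝ) ^ (s - 1/2) / jb (τ + γ * |(m:ℝ)| * (m:ℝ)) ^ (1/2:ℝ)) *
            ∑' n₁ : ℤ, ∫⁻ τ₁ : ℝ,
              ENNReal.ofReal (blockF a m (τ₁, n₁) * blockF 0 0 (τ - τ₁, m - n₁) /
                (jb (n₁ : ℝ) ^ s * jb (τ₁ + (n₁ : ℝ) ^ 2) ^ (1/2 : ℝ)
                  * jb ((m : ℝ) - (n₁ : ℝ)) ^ s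
                  * jb (τ - τ₁ - ((m : ℝ) - (n₁ : ℝ)) ^ 2) ^ (1/2 : ℝ))) := by
          refine mul_le_mul' (ENNReal.ofReal_le_ofReal ?_) (hin.trans (ENNReal.le_tsum m))
          rw [hres, habs, hjbm]
          have hd : jb (τ + (N:ℝ)^2) ^ (1/2:ℝ) ≤ 2 :=
            jb_half_le_two (abs_le.mpr ⟨by linarith, by linarith⟩)
          have hd0 : 0 < jb (τ + (N:ℝ)^2) ^ (1/2:ℝ) := jb_half_pos _
          gcongr
      _ = Bγt γ s (blockF a m) (blockF 0 0) τ m := rfl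
  -- global lower bound
  have houter : ENNReal.ofReal K ^ 2 * ENNReal.ofReal (1/2) ≤
      ∑' n : ℤ, ∫⁻ τ : ℝ, (Bγt γ s (blockF a m) (blockF 0 0) τ n) ^ 2 := by
    calc ENNReal.ofReal K ^ 2 * ENNReal.ofReal (1/2)
        = ENNReal.ofReal K ^ 2 * volume (Set.Icc (a+1/2) (a+1)) := by
          rw [Real.volume_Icc]; norm_num
      _ = ∫⁻ _ in Set.Icc (a+1/2) (a+1), ENNReal.ofReal K ^ 2 := (setLIntegral_const _ _).symm
      _ ≤ ∫⁻ τ in Set.Icc (a+1/2) (a+1), (Bγt γ s (blockF a m) (blockF 0 0) τ m) ^ 2 :=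
          setLIntegral_mono' measurableSet_Icc
            (fun τ hτ => pow_le_pow_left₀ zero_le (hpt τ hτ) 2)
      _ ≤ ∫⁻ τ, (Bγt γ s (blockF a m) (blockF 0 0) τ m) ^ 2 := setLIntegral_le_lintegral _ _
      _ ≤ ∑' n : ℤ, ∫⁻ τ : ℝ, (Bγt γ s (blockF a m) (blockF 0 0) τ n) ^ 2 := ENNReal.le_tsum m
  have hlt : ENNReal.ofReal C < (ENNReal.ofReal K ^ 2 * ENNReal.ofReal (1/2)) ^ (1/2:ℝ) := by
    rw [← ENNReal.ofReal_pow hK0.le, ← ENNReal.ofReal_mul (by positivity),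
      ENNReal.ofReal_rpow_of_pos (by positivity)]
    rw [ENNReal.ofReal_lt_ofReal_iff (by positivity)]
    have hCe : C = (C^2) ^ (1/2:ℝ) := by
      rw [← Real.rpow_natCast C 2, ← Real.rpow_mul hC.le]; norm_num
    conv_lhs => rw [hCe]
    apply Real.rpow_lt_rpow (by positivity) ?_ (by norm_num)
    have h16 : K * (16 * q) = N := by rw [hKdef]; field_simp
    have hK2 : K ^ 2 * (256 * (1 + (N:ℝ))) = (N:ℝ) ^ 2 := by
      linear_combination (K * (16*q) + (N:ℝ)) * h16 - 256 * K^2 * hq2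
    have key : 512 * C^2 * (1 + (N:ℝ)) < (N:ℝ)^2 := by
      nlinarith [mul_nonneg (by linarith : (0:ℝ) ≤ (N:ℝ) - 2048*C^2 - 1) h1N.le,
        sq_nonneg C, sq_nonneg ((N:ℝ) - 1)]
    have h6 : 2*C^2 * (256*(1+(N:ℝ))) < K^2 * (256*(1+(N:ℝ))) := by
      rw [hK2]; nlinarith [key]
    have h7 : 2*C^2 < K^2 := lt_of_mul_lt_mul_right h6 (by positivity)
    linarith
  exact lt_of_lt_of_le hlt (ENNReal.rpow_le_rpow houter (by norm_num))

/-- For `|γ| = 1` and arbitrary `s ∈ ℝ`, the bilinear estimate for `B̃_γ` fails. -/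
theorem periodic_bilinear_estimate_Y_fails_gamma_one (γ s : ℝ) (hγ1 : |γ| = 1) :
    ∀ C : ℝ, 0 < C → ∃ f g : ℝ × ℤ → ℝ,
      Measurable f ∧ Measurable g ∧ (∀ p, 0 ≤ f p) ∧ (∀ p, 0 ≤ g p) ∧
      l2RZ f ≠ ⊤ ∧ l2RZ g ≠ ⊤ ∧
      ENNReal.ofReal C * l2RZ f * l2RZ g <
        (∑' n : ℤ, ∫⁻ τ : ℝ, (Bγt γ s f g τ n) ^ 2) ^ (1/2 : ℝ) := by
  intro C hC
  set N : ℕ := ⌈(2048:ℝ) * C ^ 2⌉₊ + 1 with hNdef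
  have hN1 : (1:ℝ) ≤ N := by
    have : 1 ≤ N := by rw [hNdef]; exact Nat.le_add_left 1 _
    exact_mod_cast this
  have hNC : 2048 * C ^ 2 + 1 ≤ (N:ℝ) := by
    have h1 : (2048:ℝ) * C ^ 2 ≤ (⌈(2048:ℝ) * C ^ 2⌉₊ : ℝ) := Nat.le_ceil _
    have h2 : (N:ℝ) = (⌈(2048:ℝ)*C^2⌉₊ : ℝ) + 1 := by rw [hNdef]; push_cast; ring
    linarith
  obtain hγ | hγ := (abs_eq (by norm_num : (0:ℝ) ≤ 1)).mp hγ1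
  · have habs : |(((N:ℤ)):ℝ)| = (N:ℝ) := by
      rw [Int.cast_natCast]; exact abs_of_nonneg (Nat.cast_nonneg N)
    have hres : γ * |(((N:ℤ)):ℝ)| * (((N:ℤ)):ℝ) = (N:ℝ)^2 := by
      rw [hγ, habs, Int.cast_natCast]; ring
    exact main_aux γ s C hC N N hN1 hNC habs hres
  · have hcast : (((-(N:ℤ) : ℤ)) : ℝ) = -((N:ℕ):ℝ) := by push_cast; ring
    have habs : |(((-(N:ℤ) : ℤ)):ℝ)| = (N:ℝ) := by
      rw [hcast, abs_neg]
      exact abs_of_nonneg (Nat.cast_nonneg N)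
    have hres : γ * |(((-(N:ℤ) : ℤ)):ℝ)| * (((-(N:ℤ) : ℤ)):ℝ) = (N:ℝ)^2 := by
      rw [hγ, habs, hcast]; ring
    exact main_aux γ s C hC N (-(N:ℤ)) hN1 hNC habs hres
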